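/- arXiv:1903.05420 — 8 statements merged into one kernel-verified Lean document; each statement's English description precedes it below -/
import Mathlib

section
/- Let ω : ℝ → ℝ be smooth, let τ, α, X₀, Y₀ ∈ ℝ and u₀ ∈ ℂ, and assume cosh(ω(t) + iτ) ≠ 0 for all t ∈ ℝ. Define u : ℂ → ℂ by u(X + iY) = u₀ + α·((X − X₀) + i·∫_{Y₀}^{Y} tanh(ω(t) + iτ) dt). Then u is smooth and satisfies, at every point Z = X + iY, the Beltrami equation e^{ω(Y)+iτ}·u_{Z̄}(Z) − e^{−ω(Y)−iτ}·u_Z(Z) = 0; equivalently u_X = α and u_Y = i·α·tanh(ω(Y) + iτ). -/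
open scoped NNReal ENNReal

noncomputable def wderiv (f : ℂ → ℂ) (z : ℂ) : ℂ :=
  (fderiv ℝ f z 1 - Complex.I * fderiv ℝ f z Complex.I) / 2

noncomputable def wderivBar (f : ℂ → ℂ) (z : ℂ) : ℂ :=
  (fderiv ℝ f z 1 + Complex.I * fderiv ℝ f z Complex.I) / 2

/-- The explicit map
`u(X+iY) = u₀ + α((X − X₀) + i ∫_{Y₀}^{Y} tanh(ω(t)+iτ) dt)` is smooth and solves the
Beltrami equation `e^{ω(Y)+iτ} u_Z̄ − e^{−ω(Y)−iτ} u_Z = 0`; equivalently `u_X = α`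
and `u_Y = iα tanh(ω(Y)+iτ)`. -/
theorem one_soliton_beltrami_solution
    (ω : ℝ → ℝ) (hω : ContDiff ℝ (⊤ : ℕ∞) ω)
    (τ α X₀ Y₀ : ℝ) (u₀ : ℂ)
    (hcosh : ∀ t : ℝ, Complex.cosh ((ω t : ℂ) + (τ : ℂ) * Complex.I) ≠ 0)
    (u : ℂ → ℂ)
    (hu : u = fun Z => u₀ + (α : ℂ) * (((Z.re - X₀ : ℝ) : ℂ)
      + Complex.I * ∫ t in Y₀..Z.im, Complex.tanh ((ω t : ℂ) + (τ : ℂ) * Complex.I))) :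
    ContDiff ℝ (⊤ : ℕ∞) u ∧
    (∀ Z : ℂ,
      Complex.exp ((ω Z.im : ℂ) + (τ : ℂ) * Complex.I) * wderivBar u Z
        - Complex.exp (-((ω Z.im : ℂ) + (τ : ℂ) * Complex.I)) * wderiv u Z = 0) ∧
    (∀ Z : ℂ,
      fderiv ℝ u Z 1 = (α : ℂ)
      ∧ fderiv ℝ u Z Complex.I
          = Complex.I * (α : ℂ) * Complex.tanh ((ω Z.im : ℂ) + (τ : ℂ) * Complex.I)) := by
  set g : ℝ → ℂ := fun t => Complex.tanh ((ω t : ℂ) + (τ : ℂ) * Complex.I) with hgdef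
  have hφ : ContDiff ℝ (⊤ : ℕ∞) (fun t : ℝ => ((ω t : ℂ) + (τ : ℂ) * Complex.I)) :=
    (Complex.ofRealCLM.contDiff.comp hω).add contDiff_const
  have hsinh : ContDiff ℝ (⊤ : ℕ∞) (fun t : ℝ => Complex.sinh ((ω t : ℂ) + (τ : ℂ) * Complex.I)) :=
    (Complex.contDiff_sinh.restrict_scalars ℝ).comp hφ
  have hcoshc : ContDiff ℝ (⊤ : ℕ∞) (fun t : ℝ => Complex.cosh ((ω t : ℂ) + (τ : ℂ) * Complex.I)) :=
    (Complex.contDiff_cosh.restrict_scalars ℝ).comp hφ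
  have hgc : ContDiff ℝ (⊤ : ℕ∞) g := by
    have : g = fun t => Complex.sinh ((ω t : ℂ) + (τ : ℂ) * Complex.I)
        / Complex.cosh ((ω t : ℂ) + (τ : ℂ) * Complex.I) := by
      funext t; simp [hgdef, Complex.tanh_eq_sinh_div_cosh]
    rw [this]
    simp only [div_eq_mul_inv]
    exact hsinh.mul (hcoshc.inv (fun t => hcosh t))
  set G : ℝ → ℂ := fun y => ∫ t in Y₀..y, g t with hGdef
  have hGd : ∀ y : ℝ, HasDerivAt G (g y) y := by
    intro y
    exact intervalIntegral.integral_hasDerivAt_right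
      (hgc.continuous.intervalIntegrable _ _)
      (hgc.continuous.stronglyMeasurableAtFilter _ _)
      hgc.continuous.continuousAt
  have hGc : ContDiff ℝ (⊤ : ℕ∞) G := by
    have hdG : deriv G = g := funext fun y => (hGd y).deriv
    exact contDiff_infty_iff_deriv.2 ⟨fun y => (hGd y).differentiableAt, by rw [hdG]; exact hgc⟩
  have husm : ContDiff ℝ (⊤ : ℕ∞) u := by
    rw [hu]
    refine contDiff_const.add (contDiff_const.mul (ContDiff.add ?_ ?_))
    · exact Complex.ofRealCLM.contDiff.comp ((Complex.reCLM.contDiff).sub contDiff_const)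
    · exact contDiff_const.mul (hGc.comp Complex.imCLM.contDiff)
  have hfd : ∀ Z : ℂ, fderiv ℝ u Z 1 = (α : ℂ) ∧
      fderiv ℝ u Z Complex.I = Complex.I * (α : ℂ) * g Z.im := by
    intro Z
    have h1 : HasFDerivAt (fun Z : ℂ => ((Z.re - X₀ : ℝ) : ℂ))
        (Complex.ofRealCLM.comp Complex.reCLM) Z :=
      Complex.ofRealCLM.hasFDerivAt.comp Z (Complex.reCLM.hasFDerivAt.sub_const X₀)
    have h2 : HasFDerivAt (fun Z : ℂ => G Z.im)
        (((1 : ℝ →L[ℝ] ℝ).smulRight (g Z.im)).comp Complex.imCLM) Z :=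
      ((hGd Z.im).hasFDerivAt).comp Z Complex.imCLM.hasFDerivAt
    have h3 := ((h1.add (h2.const_mul Complex.I)).const_mul (α : ℂ)).const_add u₀
    replace h3 := h3.congr_of_eventuallyEq (f₁ := u) (Filter.Eventually.of_forall fun x => by rw [hu]; rfl)
    have hF := h3.fderiv
    constructor
    · rw [hF]; simp
    · rw [hF]; simp; ring
  refine ⟨husm, ?_, fun Z => hfd Z⟩
  intro Z
  obtain ⟨e1, e2⟩ := hfd Z
  simp only [wderiv, wderivBar, e1, e2]
  have hc := hcosh Z.im
  rw [hgdef]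
  simp only [Complex.tanh_eq_sinh_div_cosh]
  rw [← Complex.cosh_add_sinh, ← Complex.cosh_sub_sinh]
  set cc := Complex.cosh ((ω Z.im : ℂ) + (τ : ℂ) * Complex.I) with hccdef
  set ss := Complex.sinh ((ω Z.im : ℂ) + (τ : ℂ) * Complex.I) with hssdef
  have h1 : Complex.I * (Complex.I * (α : ℂ) * (ss / cc)) = -((α : ℂ) * ss / cc) := by
    rw [show Complex.I * (Complex.I * (α : ℂ) * (ss / cc))
        = Complex.I * Complex.I * ((α : ℂ) * (ss / cc)) from by ring, Complex.I_mul_I]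
    ring
  rw [h1]
  field_simp
  ring
end

section
/- Let ω : ℝ → ℝ be smooth, let τ, α, X₀, Y₀ ∈ ℝ and u₀ ∈ ℂ, and assume cosh(ω(t) + iτ) ≠ 0 for all t ∈ ℝ. Define u : ℂ → ℂ by u(X + iY) = u₀ + α·((X − X₀) + i·∫_{Y₀}^{Y} tanh(ω(t) + iτ) dt), and let ū denote the complex conjugate of u. Then for every Z = X + iY one has u_Z(Z)·(ū)_Z(Z) = (α²/4)·e^{2iτ}/(cos²(τ)·cosh²(ω(Y)) + sin²(τ)·sinh²(ω(Y))). In particular e^{−2iτ}·u_Z·(ū)_Z is real and positive wherever α ≠ 0. -/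
private lemma normSq_cosh_aux (x y : ℝ) :
    Complex.normSq (Complex.cosh ((x:ℂ) + (y:ℂ)*Complex.I))
      = Real.cos y^2 * Real.cosh x^2 + Real.sin y^2 * Real.sinh x^2 := by
  have h : Complex.cosh ((x:ℂ)+(y:ℂ)*Complex.I)
      = ((Real.cosh x * Real.cos y : ℝ):ℂ) + ((Real.sinh x * Real.sin y : ℝ):ℂ)*Complex.I := by
    rw [Complex.cosh_add, Complex.cosh_mul_I, Complex.sinh_mul_I]; push_cast; ring
  rw [h, Complex.normSq_add_mul_I]; ring

private lemma prod_key_aux (x y : ℝ) (h : Complex.cosh ((x:ℂ)+(y:ℂ)*Complex.I) ≠ 0) :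
    (1 + Complex.tanh ((x:ℂ)+(y:ℂ)*Complex.I))
      * (1 - (starRingEnd ℂ) (Complex.tanh ((x:ℂ)+(y:ℂ)*Complex.I)))
    = Complex.exp (2*(y:ℂ)*Complex.I)
      / ((Real.cos y^2 * Real.cosh x^2 + Real.sin y^2 * Real.sinh x^2 : ℝ):ℂ) := by
  set a : ℂ := (x:ℂ)+(y:ℂ)*Complex.I with ha
  have hc' : (starRingEnd ℂ) (Complex.cosh a) ≠ 0 := by simpa using h
  have h1 : 1 + Complex.tanh a = Complex.exp a / Complex.cosh a := by
    rw [Complex.tanh_eq_sinh_div_cosh, ← Complex.cosh_add_sinh a]; field_simp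
  have h2 : 1 - (starRingEnd ℂ) (Complex.tanh a)
      = Complex.exp (-(starRingEnd ℂ) a) / (starRingEnd ℂ) (Complex.cosh a) := by
    rw [← Complex.tanh_conj, Complex.tanh_eq_sinh_div_cosh,
      ← Complex.cosh_sub_sinh (starRingEnd ℂ a), Complex.cosh_conj]
    field_simp
  rw [h1, h2, div_mul_div_comm, ← Complex.exp_add, Complex.mul_conj]
  have haa : a + -(starRingEnd ℂ) a = 2*(y:ℂ)*Complex.I := by
    simp [ha, map_add, map_mul, Complex.conj_ofReal, Complex.conj_I]; ring
  rw [haa, normSq_cosh_aux x y]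

/-- For the one-soliton map
`u(X+iY) = u₀ + α((X − X₀) + i ∫_{Y₀}^{Y} tanh(ω(t)+iτ) dt)` one has
`u_Z (ū)_Z = (α²/4) e^{2iτ} / (cos²τ cosh²ω(Y) + sin²τ sinh²ω(Y))`; in particular
`e^{−2iτ} u_Z (ū)_Z` is real and positive wherever `α ≠ 0`. -/
theorem one_soliton_hopf_density
    (ω : ℝ → ℝ) (hω : ContDiff ℝ (⊤ : ℕ∞) ω)
    (τ α X₀ Y₀ : ℝ) (u₀ : ℂ)
    (hcosh : ∀ t : ℝ, Complex.cosh ((ω t : ℂ) + (τ : ℂ) * Complex.I) ≠ 0)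
    (u : ℂ → ℂ)
    (hu : u = fun Z => u₀ + (α : ℂ) * (((Z.re - X₀ : ℝ) : ℂ)
      + Complex.I * ∫ t in Y₀..Z.im, Complex.tanh ((ω t : ℂ) + (τ : ℂ) * Complex.I))) :
    (∀ Z : ℂ,
      wderiv u Z * wderiv (fun w => starRingEnd ℂ (u w)) Z
        = ((α : ℂ) ^ 2 / 4) * Complex.exp (2 * (τ : ℂ) * Complex.I)
          / ((Real.cos τ ^ 2 * Real.cosh (ω Z.im) ^ 2
              + Real.sin τ ^ 2 * Real.sinh (ω Z.im) ^ 2 : ℝ) : ℂ)) ∧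
    (α ≠ 0 → ∀ Z : ℂ, ∃ r : ℝ, 0 < r ∧
      Complex.exp (-(2 * (τ : ℂ) * Complex.I)) * wderiv u Z
        * wderiv (fun w => starRingEnd ℂ (u w)) Z = (r : ℂ)) := by
  set g : ℝ → ℂ := fun t => Complex.tanh ((ω t : ℂ) + (τ : ℂ) * Complex.I) with hgdef
  have hgc : Continuous g := by
    have h1 : Continuous fun t : ℝ => (ω t : ℂ) + (τ:ℂ)*Complex.I :=
      (Complex.continuous_ofReal.comp hω.continuous).add continuous_const
    have := (Complex.continuous_sinh.comp h1).div (Complex.continuous_cosh.comp h1) hcosh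
    convert this using 1
    funext t
    simp [hgdef, Complex.tanh_eq_sinh_div_cosh]
  -- the Wirtinger derivatives of u and conj ∘ u
  have key : ∀ Z : ℂ, wderiv u Z = (α:ℂ) * (1 + g Z.im) / 2 ∧
      wderiv (fun w => starRingEnd ℂ (u w)) Z
        = (α:ℂ) * (1 - (starRingEnd ℂ) (g Z.im)) / 2 := by
    intro Z
    set G : ℝ → ℂ := fun y => ∫ t in Y₀..y, g t with hGdef
    have hG : HasDerivAt G (g Z.im) Z.im := (hgc.integral_hasStrictDerivAt Y₀ Z.im).hasDerivAt
    have him : HasFDerivAt (fun W : ℂ => G W.im)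
        (((1 : ℝ →L[ℝ] ℝ).smulRight (g Z.im)).comp Complex.imCLM) Z :=
      (hG.hasFDerivAt).comp Z Complex.imCLM.hasFDerivAt
    have hre : HasFDerivAt (fun W : ℂ => ((W.re : ℝ) : ℂ))
        (Complex.ofRealCLM.comp Complex.reCLM) Z :=
      (Complex.ofRealCLM.comp Complex.reCLM).hasFDerivAt
    have hu' : HasFDerivAt u
        ((α:ℂ) • ((Complex.ofRealCLM.comp Complex.reCLM)
          + Complex.I • (((1 : ℝ →L[ℝ] ℝ).smulRight (g Z.im)).comp Complex.imCLM))) Z := by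
      rw [hu]
      have h3 : HasFDerivAt (fun W : ℂ => ((W.re - X₀ : ℝ):ℂ))
          (Complex.ofRealCLM.comp Complex.reCLM) Z := by
        simpa [sub_eq_add_neg, Complex.ofReal_add] using (hre.add_const (-(X₀:ℂ)))
      exact (((h3.add (him.const_mul Complex.I)).const_mul (α:ℂ)).const_add u₀)
    have hubar : HasFDerivAt (fun w => starRingEnd ℂ (u w))
        ((Complex.conjCLE : ℂ ≃L[ℝ] ℂ).toContinuousLinearMap.comp
          ((α:ℂ) • ((Complex.ofRealCLM.comp Complex.reCLM)
            + Complex.I • (((1 : ℝ →L[ℝ] ℝ).smulRight (g Z.im)).comp Complex.imCLM)))) Z := by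
      exact ((Complex.conjCLE : ℂ ≃L[ℝ] ℂ).toContinuousLinearMap.hasFDerivAt.comp Z hu')
    constructor
    · rw [wderiv, hu'.fderiv]
      simp
      linear_combination (-(α:ℂ) * g Z.im) * Complex.I_sq
    · rw [wderiv, hubar.fderiv]
      simp [Complex.conjCLE_apply, map_add, map_mul, Complex.conj_ofReal, Complex.conj_I]
      linear_combination ((α:ℂ) * (starRingEnd ℂ) (g Z.im)) * Complex.I_sq
  have h1 : ∀ Z : ℂ,
      wderiv u Z * wderiv (fun w => starRingEnd ℂ (u w)) Z
        = ((α : ℂ) ^ 2 / 4) * Complex.exp (2 * (τ : ℂ) * Complex.I)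
          / ((Real.cos τ ^ 2 * Real.cosh (ω Z.im) ^ 2
              + Real.sin τ ^ 2 * Real.sinh (ω Z.im) ^ 2 : ℝ) : ℂ) := by
    intro Z
    obtain ⟨k1, k2⟩ := key Z
    rw [k1, k2]
    have hpk := prod_key_aux (ω Z.im) τ (hcosh Z.im)
    have : (α:ℂ) * (1 + g Z.im) / 2 * ((α:ℂ) * (1 - (starRingEnd ℂ) (g Z.im)) / 2)
        = ((α:ℂ)^2/4) * ((1 + g Z.im) * (1 - (starRingEnd ℂ) (g Z.im))) := by ring
    rw [this, hgdef]
    simp only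
    rw [hpk]
    ring
  refine ⟨h1, fun hα Z => ?_⟩
  set D : ℝ := Real.cos τ ^ 2 * Real.cosh (ω Z.im) ^ 2
      + Real.sin τ ^ 2 * Real.sinh (ω Z.im) ^ 2 with hD
  have hDpos : 0 < D := by
    rw [hD, ← normSq_cosh_aux (ω Z.im) τ]
    exact Complex.normSq_pos.2 (hcosh Z.im)
  refine ⟨α^2/(4*D), by positivity, ?_⟩
  rw [mul_assoc, h1 Z]
  have he : Complex.exp (-(2 * (τ:ℂ) * Complex.I)) * Complex.exp (2 * (τ:ℂ) * Complex.I) = 1 := by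
    rw [← Complex.exp_add]; simp
  have : Complex.exp (-(2 * (τ:ℂ) * Complex.I))
      * (((α:ℂ)^2/4) * Complex.exp (2 * (τ:ℂ) * Complex.I) / (D:ℂ))
      = (Complex.exp (-(2 * (τ:ℂ) * Complex.I)) * Complex.exp (2 * (τ:ℂ) * Complex.I))
        * ((α:ℂ)^2/(4*(D:ℂ))) := by ring
  rw [this, he, one_mul]
  push_cast
  ring
end

section
/- Let t > 0, let I ⊆ ℝ be an open interval, and let φ : I → ℝ be smooth with φ''(x) = (1/(2t²))·sinh(2φ(x)) for all x ∈ I. Define Ω = {x + iy ∈ ℂ : x ∈ I}, V = {w ∈ ℂ : |Im w| < πt/2}, F : V → ℝ by F(w) = −2·log(t·cos(Im w / t)), and U : Ω → ℂ by U(x + iy) = y + i·t·arctan(sinh(φ(x))). Then U maps Ω into V, the conformal metric e^{F(w)}|dw|² on V has constant Gauss curvature −1 (i.e. −2·F_{wW̄}·e^{−F} = −1 on V), and U is a harmonic map: U_{zz̄} + (F_w ∘ U)·U_z·U_{z̄} = 0 on Ω. -/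
lemma fderiv_split (p q : ℝ → ℂ) (p' q' : ℂ) (z : ℂ)
    (hp : HasDerivAt p p' z.re) (hq : HasDerivAt q q' z.im) :
    HasFDerivAt (fun w : ℂ => p w.re + q w.im)
      ((((1 : ℝ →L[ℝ] ℝ).smulRight p').comp Complex.reCLM)
        + (((1 : ℝ →L[ℝ] ℝ).smulRight q').comp Complex.imCLM)) z :=
  (hp.hasFDerivAt.comp z Complex.reCLM.hasFDerivAt).add
    (hq.hasFDerivAt.comp z Complex.imCLM.hasFDerivAt)

lemma wderiv_split (p q : ℝ → ℂ) (p' q' : ℂ) (z : ℂ)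
    (hp : HasDerivAt p p' z.re) (hq : HasDerivAt q q' z.im) :
    wderiv (fun w : ℂ => p w.re + q w.im) z = (p' - Complex.I * q') / 2 := by
  unfold wderiv
  rw [(fderiv_split p q p' q' z hp hq).fderiv]
  simp [Complex.real_smul]

lemma wderivBar_split (p q : ℝ → ℂ) (p' q' : ℂ) (z : ℂ)
    (hp : HasDerivAt p p' z.re) (hq : HasDerivAt q q' z.im) :
    wderivBar (fun w : ℂ => p w.re + q w.im) z = (p' + Complex.I * q') / 2 := by
  unfold wderivBar
  rw [(fderiv_split p q p' q' z hp hq).fderiv]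
  simp [Complex.real_smul]

lemma wderiv_congr {f g : ℂ → ℂ} {z : ℂ} (h : f =ᶠ[nhds z] g) :
    wderiv f z = wderiv g z := by unfold wderiv; rw [h.fderiv_eq]

lemma wderivBar_congr {f g : ℂ → ℂ} {z : ℂ} (h : f =ᶠ[nhds z] g) :
    wderivBar f z = wderivBar g z := by unfold wderivBar; rw [h.fderiv_eq]

/-- Wolf's hyperbolic-cylinder harmonic map: if
`φ'' = (1/(2t²)) sinh(2φ)` on an open interval `I`, then
`U(x+iy) = y + i t arctan(sinh φ(x))` maps `{Re ∈ I}` into the strip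
`{|Im w| < πt/2}`, the metric `e^{F}|dw|²` with `F(w) = −2 log(t cos(Im w / t))`
has constant Gauss curvature `−1`, and `U` is harmonic for this metric. -/
theorem wolf_cylinder_harmonic_map
    (t : ℝ) (ht : 0 < t)
    (I : Set ℝ) (hIopen : IsOpen I) (hIconn : I.OrdConnected)
    (φ : ℝ → ℝ) (hφ : ContDiffOn ℝ (⊤ : ℕ∞) φ I)
    (hode : ∀ x ∈ I, deriv (deriv φ) x = 1 / (2 * t ^ 2) * Real.sinh (2 * φ x))
    (Ω : Set ℂ) (hΩ : Ω = {z : ℂ | z.re ∈ I})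
    (V : Set ℂ) (hV : V = {w : ℂ | |w.im| < Real.pi * t / 2})
    (F : ℂ → ℝ) (hF : F = fun w => -2 * Real.log (t * Real.cos (w.im / t)))
    (U : ℂ → ℂ)
    (hU : U = fun z => (z.im : ℂ)
      + Complex.I * (t : ℂ) * ((Real.arctan (Real.sinh (φ z.re)) : ℝ) : ℂ)) :
    (∀ z ∈ Ω, U z ∈ V) ∧
    (∀ w ∈ V,
      -2 * wderivBar (fun v => wderiv (fun x => ((F x : ℝ) : ℂ)) v) w
        * Complex.exp (-(F w : ℂ)) = -1) ∧
    (∀ z ∈ Ω,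
      wderiv (fun w => wderivBar U w) z
        + wderiv (fun w => ((F w : ℝ) : ℂ)) (U z) * wderiv U z * wderivBar U z = 0) := by
  have ht0 : t ≠ 0 := ht.ne'
  -- Part 1
  have hUim : ∀ z : ℂ, (U z).im = t * Real.arctan (Real.sinh (φ z.re)) := by
    intro z; rw [hU]
    simp only [Complex.add_im, Complex.mul_im, Complex.mul_re, Complex.I_re,
      Complex.I_im, Complex.ofReal_re, Complex.ofReal_im]
    ring
  have part1 : ∀ z ∈ Ω, U z ∈ V := by
    intro z _
    rw [hV]
    simp only [Set.mem_setOf_eq, hUim z]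
    rw [abs_mul, abs_of_pos ht]
    calc t * |Real.arctan (Real.sinh (φ z.re))| < t * (Real.pi / 2) := by
          apply mul_lt_mul_of_pos_left _ ht
          rw [abs_lt]
          exact ⟨Real.neg_pi_div_two_lt_arctan _, Real.arctan_lt_pi_div_two _⟩
      _ = Real.pi * t / 2 := by ring
  -- cosine positivity on the strip
  have hcospos : ∀ y : ℝ, |y| < Real.pi * t / 2 → 0 < Real.cos (y / t) := by
    intro y hy
    rw [abs_lt] at hy
    apply Real.cos_pos_of_mem_Ioo
    constructor
    · rw [lt_div_iff₀ ht] at *; nlinarith [hy.1]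
    · rw [div_lt_iff₀ ht]; nlinarith [hy.2]
  -- the Wirtinger derivative of F
  have hFw : ∀ w : ℂ, |w.im| < Real.pi * t / 2 →
      wderiv (fun x : ℂ => ((F x : ℝ) : ℂ)) w
        = -Complex.I * ((Real.tan (w.im / t) / t : ℝ) : ℂ) := by
    intro w hw
    have hcos := hcospos w.im hw
    have htc : 0 < t * Real.cos (w.im / t) := mul_pos ht hcos
    have hy : HasDerivAt (fun y : ℝ => y / t) (1 / t) w.im :=
      (hasDerivAt_id w.im).div_const t
    have hc : HasDerivAt (fun y : ℝ => Real.cos (y / t))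
        (-Real.sin (w.im / t) * (1 / t)) w.im := by
      have h := (Real.hasDerivAt_cos (w.im / t)).comp w.im hy
      exact h
    have htc' : HasDerivAt (fun y : ℝ => t * Real.cos (y / t))
        (t * (-Real.sin (w.im / t) * (1 / t))) w.im := hc.const_mul t
    have hlog := (htc'.log htc.ne').const_mul (-2 : ℝ)
    have h1 : HasDerivAt (fun y : ℝ => -2 * Real.log (t * Real.cos (y / t)))
        (2 * Real.tan (w.im / t) / t) w.im := by
      refine hlog.congr_deriv ?_
      rw [Real.tan_eq_sin_div_cos]
      field_simp
    have hfun : (fun x : ℂ => ((F x : ℝ) : ℂ))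
        = fun v : ℂ => (fun _ : ℝ => (0 : ℂ)) v.re
          + (fun y : ℝ => ((-2 * Real.log (t * Real.cos (y / t)) : ℝ) : ℂ)) v.im := by
      rw [hF]; funext v; simp
    rw [hfun, wderiv_split _ _ 0 ((2 * Real.tan (w.im / t) / t : ℝ) : ℂ) w
      (hasDerivAt_const _ _) h1.ofReal_comp]
    push_cast
    ring
  have hVopen : IsOpen V := by
    rw [hV]
    exact isOpen_Iio.preimage ((continuous_abs).comp Complex.continuous_im)
  refine ⟨part1, ?_, ?_⟩
  -- Part 2 : curvature = -1
  · intro w hw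
    have hwV : w ∈ V := hw
    rw [hV] at hw
    simp only [Set.mem_setOf_eq] at hw
    have hcos := hcospos w.im hw
    have hcosne := hcos.ne'
    -- replace inner wderiv on a neighborhood
    have hev : (fun v => wderiv (fun x : ℂ => ((F x : ℝ) : ℂ)) v)
        =ᶠ[nhds w] fun v => -Complex.I * ((Real.tan (v.im / t) / t : ℝ) : ℂ) := by
      filter_upwards [hVopen.mem_nhds hwV] with v hv
      exact hFw v (by rw [hV] at hv; exact hv)
    rw [wderivBar_congr hev]
    -- derivative of tan(y/t)/t
    have hy : HasDerivAt (fun y : ℝ => y / t) (1 / t) w.im :=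
      (hasDerivAt_id w.im).div_const t
    have htan : HasDerivAt (fun y : ℝ => Real.tan (y / t) / t)
        (1 / Real.cos (w.im / t) ^ 2 * (1 / t) / t) w.im := by
      have h := (((Real.hasDerivAt_tan hcosne).comp w.im hy).div_const t)
      exact h
    have hq : HasDerivAt (fun y : ℝ => -Complex.I * ((Real.tan (y / t) / t : ℝ) : ℂ))
        (-Complex.I * ((1 / Real.cos (w.im / t) ^ 2 * (1 / t) / t : ℝ) : ℂ)) w.im :=
      (htan.ofReal_comp).const_mul (-Complex.I)
    have hfun2 : (fun v : ℂ => -Complex.I * ((Real.tan (v.im / t) / t : ℝ) : ℂ))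
        = fun v : ℂ => (fun _ : ℝ => (0 : ℂ)) v.re
          + (fun y : ℝ => -Complex.I * ((Real.tan (y / t) / t : ℝ) : ℂ)) v.im := by
      funext v; simp
    rw [hfun2, wderivBar_split _ _ 0 _ w (hasDerivAt_const _ _) hq]
    -- exponential of F
    have hexp : Complex.exp (-(F w : ℂ)) = (((t * Real.cos (w.im / t)) ^ 2 : ℝ) : ℂ) := by
      rw [hF]
      push_cast
      rw [show -(-2 * (Real.log (t * Real.cos (w.im / t)) : ℂ))
          = (((2 : ℕ) * Real.log (t * Real.cos (w.im / t)) : ℝ) : ℂ) by push_cast; ring]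
      rw [← Complex.ofReal_exp, Real.exp_nat_mul, Real.exp_log (mul_pos ht hcos)]
      push_cast
      ring
    rw [hexp]
    have hr1 : (1 / Real.cos (w.im / t) ^ 2 * (1 / t) / t)
        * (t * Real.cos (w.im / t)) ^ 2 = 1 := by
      field_simp
    have hcast : ((1 / Real.cos (w.im / t) ^ 2 * (1 / t) / t : ℝ) : ℂ)
        * (((t * Real.cos (w.im / t)) ^ 2 : ℝ) : ℂ) = 1 := by
      exact_mod_cast hr1
    linear_combination Complex.I ^ 2 * hcast + Complex.I_sq
  -- Part 3 : harmonicity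
  · intro z hz
    have hΩopen : IsOpen Ω := by
      rw [hΩ]; exact hIopen.preimage Complex.continuous_re
    have hx : z.re ∈ I := by rw [hΩ] at hz; exact hz
    -- derivatives of φ
    have hφat : ∀ x ∈ I, ContDiffAt ℝ (⊤ : ℕ∞) φ x := fun x hx => hφ.contDiffAt (hIopen.mem_nhds hx)
    have hd1 : ∀ x ∈ I, HasDerivAt φ (deriv φ x) x := fun x hx =>
      ((hφat x hx).differentiableAt (by simp)).hasDerivAt
    have hφ1 : ContDiffOn ℝ (⊤ : ℕ∞) (deriv φ) I := hφ.deriv_of_isOpen hIopen (by simp)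
    have hd2 : ∀ x ∈ I, HasDerivAt (deriv φ) (deriv (deriv φ) x) x := fun x hx =>
      (((hφ1.contDiffAt (hIopen.mem_nhds hx)).differentiableAt (by simp))).hasDerivAt
    -- derivative of arctan ∘ sinh ∘ φ
    have harc : ∀ x ∈ I, HasDerivAt (fun x => Real.arctan (Real.sinh (φ x)))
        (deriv φ x / Real.cosh (φ x)) x := by
      intro x hx
      have h1 := (Real.hasDerivAt_sinh (φ x)).comp x (hd1 x hx)
      have h2 := (Real.hasDerivAt_arctan (Real.sinh (φ x))).comp x h1
      refine h2.congr_deriv ?_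
      have hc := (Real.cosh_pos (φ x)).ne'
      rw [show (1 : ℝ) + Real.sinh (φ x) ^ 2 = Real.cosh (φ x) ^ 2 by
        rw [Real.cosh_sq]; ring]
      field_simp
    have hone : ∀ y : ℝ, HasDerivAt (fun y : ℝ => (y : ℂ)) 1 y := by
      intro y; simpa using (hasDerivAt_id y).ofReal_comp
    have hUfun : U = fun w : ℂ =>
        (fun x : ℝ => Complex.I * (t : ℂ) * ((Real.arctan (Real.sinh (φ x)) : ℝ) : ℂ)) w.re
          + (fun y : ℝ => (y : ℂ)) w.im := by
      rw [hU]; funext w; simp; ring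
    have hp' : ∀ x ∈ I,
        HasDerivAt (fun x : ℝ => Complex.I * (t : ℂ) * ((Real.arctan (Real.sinh (φ x)) : ℝ) : ℂ))
          (Complex.I * (t : ℂ) * ((deriv φ x / Real.cosh (φ x) : ℝ) : ℂ)) x := by
      intro x hx
      exact ((harc x hx).ofReal_comp).const_mul (Complex.I * (t : ℂ))
    -- wderivBar U and wderiv U
    have hBarU : ∀ z' ∈ Ω, wderivBar U z'
        = (Complex.I * (t : ℂ) * ((deriv φ z'.re / Real.cosh (φ z'.re) : ℝ) : ℂ)
            + Complex.I) / 2 := by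
      intro z' hz'
      have hx' : z'.re ∈ I := by rw [hΩ] at hz'; exact hz'
      rw [hUfun, wderivBar_split _ _ _ 1 z' (hp' z'.re hx') (hone z'.im)]
      ring
    have hUz : wderiv U z
        = (Complex.I * (t : ℂ) * ((deriv φ z.re / Real.cosh (φ z.re) : ℝ) : ℂ)
            - Complex.I) / 2 := by
      rw [hUfun, wderiv_split _ _ _ 1 z (hp' z.re hx) (hone z.im)]
      ring
    -- outer derivative
    have hev : (fun w => wderivBar U w) =ᶠ[nhds z]
        fun w : ℂ => (fun x : ℝ =>
          (Complex.I * (t : ℂ) * ((deriv φ x / Real.cosh (φ x) : ℝ) : ℂ) + Complex.I) / 2) w.re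
          + (fun _ : ℝ => (0 : ℂ)) w.im := by
      filter_upwards [hΩopen.mem_nhds hz] with w hw
      rw [hBarU w hw]; simp
    set c : ℝ := Real.cosh (φ z.re) with hcdef
    set s : ℝ := Real.sinh (φ z.re) with hsdef
    have hcne : c ≠ 0 := (Real.cosh_pos (φ z.re)).ne'
    have hdD : HasDerivAt (fun x => deriv φ x / Real.cosh (φ x))
        ((deriv (deriv φ) z.re * c - deriv φ z.re * (s * deriv φ z.re)) / c ^ 2) z.re := by
      have hcosh : HasDerivAt (fun x => Real.cosh (φ x)) (s * deriv φ z.re) z.re := by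
        have h := (Real.hasDerivAt_cosh (φ z.re)).comp z.re (hd1 z.re hx)
        exact h
      exact (hd2 z.re hx).div hcosh hcne
    have hp4 : HasDerivAt (fun x : ℝ =>
        (Complex.I * (t : ℂ) * ((deriv φ x / Real.cosh (φ x) : ℝ) : ℂ) + Complex.I) / 2)
        (Complex.I * (t : ℂ)
          * (((deriv (deriv φ) z.re * c - deriv φ z.re * (s * deriv φ z.re)) / c ^ 2 : ℝ) : ℂ) / 2)
        z.re := by
      exact (((hdD.ofReal_comp).const_mul (Complex.I * (t : ℂ))).add_const Complex.I).div_const 2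
    have houter : wderiv (fun w => wderivBar U w) z
        = (Complex.I * (t : ℂ)
          * (((deriv (deriv φ) z.re * c - deriv φ z.re * (s * deriv φ z.re)) / c ^ 2 : ℝ) : ℂ) / 2
          - Complex.I * 0) / 2 := by
      rw [wderiv_congr hev, wderiv_split _ _ _ 0 z hp4 (hasDerivAt_const _ _)]
    -- F_w at U z
    have hUzV : |(U z).im| < Real.pi * t / 2 := by
      have := part1 z hz; rw [hV] at this; exact this
    have hFwU : wderiv (fun w : ℂ => ((F w : ℝ) : ℂ)) (U z)
        = -Complex.I * ((s / t : ℝ) : ℂ) := by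
      rw [hFw (U z) hUzV, hUim z]
      rw [show t * Real.arctan s / t = Real.arctan s by field_simp, Real.tan_arctan]
    -- the real ODE identity
    have hreal2 : t * ((deriv (deriv φ) z.re * c - deriv φ z.re * (s * deriv φ z.re)) / c ^ 2)
        = s / t * (1 - t ^ 2 * (deriv φ z.re / c) ^ 2) := by
      rw [hsdef, hcdef, hode z.re hx, Real.sinh_two_mul]
      field_simp
    have hcast2 : (t : ℂ)
        * (((deriv (deriv φ) z.re * c - deriv φ z.re * (s * deriv φ z.re)) / c ^ 2 : ℝ) : ℂ)
        = ((s / t : ℝ) : ℂ)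
          * (1 - (t : ℂ) ^ 2 * ((deriv φ z.re / c : ℝ) : ℂ) ^ 2) := by
      exact_mod_cast hreal2
    rw [houter, hFwU, hUz, hBarU z hz]
    linear_combination (Complex.I / 4) * hcast2
      + (Complex.I / 4) * ((s / t : ℝ) : ℂ)
        * (1 - (t : ℂ) ^ 2 * ((deriv φ z.re / c : ℝ) : ℂ) ^ 2) * Complex.I_sq
end

section
/- Let t > 0, let I ⊆ ℝ be an open interval, and let φ : I → ℝ be smooth with φ''(x) = (1/(2t²))·sinh(2φ(x)) for all x ∈ I. Define Ω = {x + iy ∈ ℂ : x ∈ I}, F(w) = −2·log(t·cos(Im w / t)) on V = {w : |Im w| < πt/2}, and U(x + iy) = y + i·t·arctan(sinh(φ(x))). Then the Hopf density of U is constant: for every z = x + iy ∈ Ω, e^{F(U(z))}·U_z(z)·(Ū)_z(z) = (t²·φ'(x)² − cosh²(φ(x)))/(4t²), and the function x ↦ t²·φ'(x)² − cosh²(φ(x)) is constant on I. (Writing this constant as c₀ − 1/2, the Hopf density equals (c₀ − 1/2)/(4t²).) -/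
/-- For Wolf's cylinder map `U(x+iy) = y + i t arctan(sinh φ(x))`
with `φ'' = (1/(2t²)) sinh(2φ)`, the Hopf density is
`e^{F∘U} U_z (Ū)_z = (t² φ'(x)² − cosh²(φ(x)))/(4t²)`, and
`x ↦ t² φ'(x)² − cosh²(φ(x))` is constant on `I`. -/
theorem wolf_cylinder_hopf_density
    (t : ℝ) (ht : 0 < t)
    (I : Set ℝ) (hIopen : IsOpen I) (hIconn : I.OrdConnected)
    (φ : ℝ → ℝ) (hφ : ContDiffOn ℝ (⊤ : ℕ∞) φ I)
    (hode : ∀ x ∈ I, deriv (deriv φ) x = 1 / (2 * t ^ 2) * Real.sinh (2 * φ x))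
    (Ω : Set ℂ) (hΩ : Ω = {z : ℂ | z.re ∈ I})
    (F : ℂ → ℝ) (hF : F = fun w => -2 * Real.log (t * Real.cos (w.im / t)))
    (U : ℂ → ℂ)
    (hU : U = fun z => (z.im : ℂ)
      + Complex.I * (t : ℂ) * ((Real.arctan (Real.sinh (φ z.re)) : ℝ) : ℂ)) :
    (∀ z ∈ Ω,
      Complex.exp ((F (U z) : ℂ)) * wderiv U z
          * wderiv (fun w => starRingEnd ℂ (U w)) z
        = (((t ^ 2 * (deriv φ z.re) ^ 2 - Real.cosh (φ z.re) ^ 2) / (4 * t ^ 2) : ℝ) : ℂ)) ∧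
    (∃ c : ℝ, ∀ x ∈ I, t ^ 2 * (deriv φ x) ^ 2 - Real.cosh (φ x) ^ 2 = c) := by
  have ht' : t ≠ 0 := ht.ne'
  set g : ℝ → ℝ := fun x => t * Real.arctan (Real.sinh (φ x)) with hg
  have hd1 : ∀ x ∈ I, HasDerivAt φ (deriv φ x) x := fun x hx =>
    ((hφ.differentiableOn (by simp) x hx).differentiableAt (hIopen.mem_nhds hx)).hasDerivAt
  have hcosh : ∀ x : ℝ, Real.cosh (φ x) ≠ 0 := fun x => (Real.cosh_pos _).ne'
  have hgd : ∀ x ∈ I, HasDerivAt g (t * deriv φ x / Real.cosh (φ x)) x := by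
    intro x hx
    have h1 : HasDerivAt (fun x => Real.sinh (φ x)) (Real.cosh (φ x) * deriv φ x) x :=
      (Real.hasDerivAt_sinh (φ x)).comp x (hd1 x hx)
    have h2 := ((Real.hasDerivAt_arctan (Real.sinh (φ x))).comp x h1).const_mul t
    refine h2.congr_deriv ?_
    rw [← Real.cosh_sq']
    field_simp
  have hUeq : U = fun z : ℂ => ((z.im : ℝ) : ℂ) + Complex.I * ((g z.re : ℝ) : ℂ) := by
    funext z; simp only [hU, hg]; push_cast; ring
  have hUconj : (fun w => starRingEnd ℂ (U w))
      = fun z : ℂ => ((z.im : ℝ) : ℂ) - Complex.I * ((g z.re : ℝ) : ℂ) := by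
    funext z
    simp only [hU, hg, map_add, map_mul, Complex.conj_I, Complex.conj_ofReal]
    push_cast; ring
  constructor
  · intro z hz
    rw [hΩ] at hz
    set x := z.re with hxdef
    have hx : x ∈ I := hz
    set g' : ℝ := t * deriv φ x / Real.cosh (φ x) with hg'
    -- fderiv pieces
    have h1 : HasFDerivAt (fun z : ℂ => ((z.im : ℝ) : ℂ))
        (Complex.ofRealCLM.comp Complex.imCLM) z :=
      (Complex.ofRealCLM.comp Complex.imCLM).hasFDerivAt
    have h2 : HasFDerivAt (fun z : ℂ => ((g z.re : ℝ) : ℂ))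
        (Complex.ofRealCLM.comp (g' • Complex.reCLM)) z :=
      Complex.ofRealCLM.hasFDerivAt.comp z
        (HasDerivAt.comp_hasFDerivAt (h₂ := g) z (hgd x hx) Complex.reCLM.hasFDerivAt)
    have h3 : HasFDerivAt (fun z : ℂ => Complex.I * ((g z.re : ℝ) : ℂ))
        (Complex.I • (Complex.ofRealCLM.comp (g' • Complex.reCLM))) z := h2.const_mul _
    have hwU : wderiv U z = (Complex.I * (g' : ℂ) - Complex.I) / 2 := by
      rw [hUeq]
      unfold wderiv
      rw [HasFDerivAt.fderiv (f := fun z : ℂ => ((z.im : ℝ) : ℂ) + Complex.I * ((g z.re : ℝ) : ℂ)) (h1.add h3)]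
      simp [Complex.I_re, Complex.I_im, smul_eq_mul]
    have hwUc : wderiv (fun w => starRingEnd ℂ (U w)) z
        = (-(Complex.I * (g' : ℂ)) - Complex.I) / 2 := by
      rw [hUconj]
      unfold wderiv
      rw [HasFDerivAt.fderiv (f := fun z : ℂ => ((z.im : ℝ) : ℂ) - Complex.I * ((g z.re : ℝ) : ℂ)) (h1.sub h3)]
      simp [Complex.I_re, Complex.I_im, smul_eq_mul]
    have hprod : (Complex.I * (g' : ℂ) - Complex.I) / 2
        * ((-(Complex.I * (g' : ℂ)) - Complex.I) / 2) = ((g' ^ 2 - 1 : ℝ) : ℂ) / 4 := by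
      push_cast
      linear_combination (-((g' : ℂ) ^ 2 - 1) / 4) * Complex.I_mul_I
    -- exp part
    have hsq : Real.sqrt (1 + Real.sinh (φ x) ^ 2) = Real.cosh (φ x) := by
      rw [← Real.cosh_sq']; exact Real.sqrt_sq (Real.cosh_pos _).le
    have hexp : Complex.exp ((F (U z) : ℂ))
        = ((Real.cosh (φ x) ^ 2 / t ^ 2 : ℝ) : ℂ) := by
      have hUim : (U z).im = t * Real.arctan (Real.sinh (φ x)) := by
        rw [hU]
        simp only [Complex.add_im, Complex.mul_im, Complex.mul_re, Complex.ofReal_re,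
          Complex.ofReal_im, Complex.I_re, Complex.I_im]
        ring
      have hFU : F (U z) = -2 * Real.log (t / Real.cosh (φ x)) := by
        rw [hF]
        simp only [hUim]
        rw [mul_div_cancel_left₀ _ ht', Real.cos_arctan, hsq]
        ring_nf
      have hre : Real.exp (-2 * Real.log (t / Real.cosh (φ x)))
          = Real.cosh (φ x) ^ 2 / t ^ 2 := by
        rw [neg_mul, Real.exp_neg, two_mul, Real.exp_add,
          Real.exp_log (div_pos ht (Real.cosh_pos _))]
        field_simp
      rw [hFU, ← Complex.ofReal_exp, hre]
    rw [hexp, hwU, hwUc, mul_assoc, hprod]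
    have key : (Real.cosh (φ x) ^ 2 / t ^ 2) * ((g' ^ 2 - 1) / 4)
        = (t ^ 2 * (deriv φ x) ^ 2 - Real.cosh (φ x) ^ 2) / (4 * t ^ 2) := by
      rw [hg']
      field_simp
    exact_mod_cast congrArg Complex.ofReal key
  · -- constancy
    have hconv : Convex ℝ I := convex_iff_ordConnected.mpr hIconn
    set E : ℝ → ℝ := fun x => t ^ 2 * (deriv φ x) ^ 2 - Real.cosh (φ x) ^ 2 with hE
    have hd2 : ∀ x ∈ I, HasDerivAt (deriv φ) (deriv (deriv φ) x) x := fun x hx =>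
      (((hφ.deriv_of_isOpen hIopen (m := 1) (WithTop.coe_le_coe.mpr le_top)).differentiableOn one_ne_zero x hx).differentiableAt
        (hIopen.mem_nhds hx)).hasDerivAt
    have hEd : ∀ x ∈ I, HasDerivAt E 0 x := by
      intro x hx
      have ha := (((hd2 x hx).pow 2).const_mul (t ^ 2))
      have hb := (((Real.hasDerivAt_cosh (φ x)).comp x (hd1 x hx)).pow 2)
      have hab := ha.sub hb
      refine hab.congr_deriv ?_
      rw [hode x hx, Real.sinh_two_mul]
      field_simp
      simp only [Function.comp_apply]
      ring
    rcases I.eq_empty_or_nonempty with hIe | ⟨x₀, hx₀⟩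
    · exact ⟨0, by simp [hIe]⟩
    · refine ⟨E x₀, fun x hx => ?_⟩
      have hdiff : DifferentiableOn ℝ E I := fun y hy =>
        (hEd y hy).differentiableAt.differentiableWithinAt
      have hzero : ∀ y ∈ I, fderivWithin ℝ E I y = 0 := by
        intro y hy
        rw [fderivWithin_of_isOpen hIopen hy, (hEd y hy).hasFDerivAt.fderiv]
        exact ContinuousLinearMap.ext fun v => by simp
      exact hconv.is_const_of_fderivWithin_eq_zero hdiff hzero hx hx₀
end

section
/- Let c > 0 and define v_c : [1, ∞) → ℝ by v_c(y) = (1/√c)·sinh(√c·(y − 1) + arcsinh(√c)). Then: (i) v_c(1) = 1 and v_c(y) > 0 for all y ≥ 1, with v_c(y) → ∞ as y → ∞; (ii) v_c(y)·v_c''(y) − v_c'(y)² + 1 = 0 for all y; (iii) for the map u(x + iy) = x + i·v_c(y) into the upper half-plane with hyperbolic metric (F(w) = −2·log(Im w)), the Hopf density is the constant e^{F(u(z))}·u_z(z)·(ū)_z(z) = (1 − v_c'(y)²)/(4·v_c(y)²) = −c/4. -/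
/-!
With `s = √c`, the profile `v = sinh (s (y - 1) + arsinh s) / s` has `v' = cosh (…)` and
`v'' = s sinh (…)`, so `cosh² - sinh² = 1` gives both the ODE `v v'' - v'² + 1 = 0` and
`1 - v'² = -s² v²`. For `u = x + i v(y)` one has `u_z = (1 + v')/2`, `(ū)_z = (1 - v')/2` and
`e^{F(u)} = v⁻²`, so the Hopf density is `(1 - v'²)/(4 v²) = -s²/4 = -c/4`.
-/

open Real Filter ComplexConjugate

section GraphMap

variable {v : ℝ → ℝ} {v' : ℝ} {z : ℂ}

theorem hasFDerivAt_re_add_I_mul (hv : HasDerivAt v v' z.im) :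
    HasFDerivAt (fun w : ℂ => (w.re : ℂ) + Complex.I * (v w.im : ℂ))
      (Complex.ofRealCLM.comp Complex.reCLM
        + Complex.I • Complex.ofRealCLM.comp (v' • Complex.imCLM)) z :=
  (Complex.ofRealCLM.hasFDerivAt.comp z Complex.reCLM.hasFDerivAt).add
    ((Complex.ofRealCLM.hasFDerivAt.comp z
      (hv.comp_hasFDerivAt z Complex.imCLM.hasFDerivAt)).const_mul Complex.I)

theorem wderiv_re_add_I_mul (hv : HasDerivAt v v' z.im) :
    wderiv (fun w : ℂ => (w.re : ℂ) + Complex.I * (v w.im : ℂ)) z = (1 + v') / 2 := by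
  rw [wderiv, (hasFDerivAt_re_add_I_mul hv).fderiv]
  simp [Complex.ext_iff]

theorem wderiv_conj_re_add_I_mul (hv : HasDerivAt v v' z.im) :
    wderiv (fun w : ℂ => conj ((w.re : ℂ) + Complex.I * (v w.im : ℂ))) z = (1 - v') / 2 := by
  have hconj : HasFDerivAt (fun w : ℂ => conj ((w.re : ℂ) + Complex.I * (v w.im : ℂ)))
      ((Complex.conjCLE : ℂ →L[ℝ] ℂ).comp (Complex.ofRealCLM.comp Complex.reCLM
        + Complex.I • Complex.ofRealCLM.comp (v' • Complex.imCLM))) z :=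
    (Complex.conjCLE : ℂ →L[ℝ] ℂ).hasFDerivAt.comp z (hasFDerivAt_re_add_I_mul hv)
  rw [wderiv, hconj.fderiv]
  simp [Complex.ext_iff, sub_eq_add_neg]

theorem hyperbolic_hopf_density_re_add_I_mul (hv : HasDerivAt v v' z.im) (hpos : 0 < v z.im) :
    Complex.exp ((-2 * Real.log ((z.re : ℂ) + Complex.I * (v z.im : ℂ)).im : ℝ) : ℂ)
        * wderiv (fun w : ℂ => (w.re : ℂ) + Complex.I * (v w.im : ℂ)) z
        * wderiv (fun w : ℂ => conj ((w.re : ℂ) + Complex.I * (v w.im : ℂ))) z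
      = (((1 - v' ^ 2) / (4 * v z.im ^ 2) : ℝ) : ℂ) := by
  have hexp : Real.exp (-2 * Real.log (v z.im)) = (v z.im ^ 2)⁻¹ := by
    rw [show -2 * Real.log (v z.im) = -Real.log (v z.im ^ 2) by rw [Real.log_pow]; push_cast; ring,
      Real.exp_neg, Real.exp_log (by positivity)]
  rw [wderiv_re_add_I_mul hv, wderiv_conj_re_add_I_mul hv]
  simp only [Complex.add_im, Complex.ofReal_im, Complex.mul_im, Complex.I_re, Complex.I_im,
    Complex.ofReal_re, mul_zero, zero_add, one_mul]
  rw [← Complex.ofReal_exp, hexp]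
  have hne : (v z.im : ℂ) ≠ 0 := Complex.ofReal_ne_zero.mpr hpos.ne'
  push_cast
  field_simp
  ring

end GraphMap

noncomputable def sinhProfile (s a y : ℝ) : ℝ := 1 / s * sinh (s * (y - 1) + a)

section SinhProfile

variable {s : ℝ} (a : ℝ)

theorem hasDerivAt_sinhProfile (hs : s ≠ 0) (y : ℝ) :
    HasDerivAt (sinhProfile s a) (cosh (s * (y - 1) + a)) y := by
  have h := ((((hasDerivAt_id' y).sub_const 1).const_mul s).add_const a).sinh.const_mul (1 / s)
  exact h.congr_deriv (by field_simp)

theorem deriv_sinhProfile (hs : s ≠ 0) :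
    deriv (sinhProfile s a) = fun y => cosh (s * (y - 1) + a) :=
  funext fun y => (hasDerivAt_sinhProfile a hs y).deriv

theorem deriv_deriv_sinhProfile (hs : s ≠ 0) :
    deriv (deriv (sinhProfile s a)) = fun y => s * sinh (s * (y - 1) + a) := by
  rw [deriv_sinhProfile a hs]
  funext y
  have h := ((((hasDerivAt_id' y).sub_const 1).const_mul s).add_const a).cosh
  rw [h.deriv, mul_one, mul_comm]

theorem sinhProfile_ode (hs : s ≠ 0) (y : ℝ) :
    sinhProfile s a y * deriv (deriv (sinhProfile s a)) y
      - deriv (sinhProfile s a) y ^ 2 + 1 = 0 := by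
  rw [deriv_deriv_sinhProfile a hs, deriv_sinhProfile a hs, sinhProfile, cosh_sq]
  field_simp
  ring

theorem one_sub_deriv_sinhProfile_sq (hs : s ≠ 0) (y : ℝ) :
    1 - deriv (sinhProfile s a) y ^ 2 = -s ^ 2 * sinhProfile s a y ^ 2 := by
  rw [deriv_sinhProfile a hs, sinhProfile, cosh_sq]
  field_simp
  ring

theorem sinhProfile_pos {a : ℝ} (hs : 0 < s) (ha : 0 < a) {y : ℝ} (hy : 1 ≤ y) :
    0 < sinhProfile s a y := by
  have harg : 0 < s * (y - 1) + a := by nlinarith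
  exact mul_pos (by positivity) (sinh_pos_iff.mpr harg)

theorem tendsto_sinhProfile_atTop (hs : 0 < s) : Tendsto (sinhProfile s a) atTop atTop := by
  have hsinh : Tendsto sinh atTop atTop :=
    tendsto_atTop_mono' _ ((eventually_ge_atTop 0).mono fun _ => self_le_sinh_iff.mpr) tendsto_id
  have harg : Tendsto (fun y => s * (y - 1) + a) atTop atTop :=
    tendsto_atTop_add_const_right _ a
      ((tendsto_atTop_add_const_right _ (-1) tendsto_id).const_mul_atTop hs)
  exact (hsinh.comp harg).const_mul_atTop (one_div_pos.mpr hs)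

theorem sinhProfile_arsinh_one (hs : s ≠ 0) : sinhProfile s (arsinh s) 1 = 1 := by
  simp [sinhProfile, hs]

end SinhProfile

/-- Wolf's one-parameter family for the half-infinite cylinder:
`v_c(y) = (1/√c) sinh(√c (y−1) + arcsinh √c)` satisfies `v_c(1) = 1`, positivity for
`y ≥ 1`, `v_c → ∞`, the harmonicity ODE `v v'' − v'² + 1 = 0`, and the map
`u(x+iy) = x + i v_c(y)` into the hyperbolic half-plane has constant Hopf density
`(1 − v_c'(y)²)/(4 v_c(y)²) = −c/4`. -/
theorem wolf_half_infinite_cylinder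
    (c : ℝ) (hc : 0 < c)
    (v : ℝ → ℝ)
    (hv : v = fun y => (1 / Real.sqrt c)
      * Real.sinh (Real.sqrt c * (y - 1) + Real.arsinh (Real.sqrt c)))
    (F : ℂ → ℝ) (hF : F = fun w => -2 * Real.log w.im)
    (u : ℂ → ℂ) (hu : u = fun z => (z.re : ℂ) + Complex.I * ((v z.im : ℝ) : ℂ)) :
    (v 1 = 1 ∧ (∀ y : ℝ, 1 ≤ y → 0 < v y)
      ∧ Filter.Tendsto v Filter.atTop Filter.atTop) ∧
    (∀ y : ℝ, v y * deriv (deriv v) y - (deriv v y) ^ 2 + 1 = 0) ∧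
    (∀ z : ℂ, 1 ≤ z.im →
      Complex.exp ((F (u z) : ℂ)) * wderiv u z
          * wderiv (fun w => starRingEnd ℂ (u w)) z
        = (((1 - (deriv v z.im) ^ 2) / (4 * (v z.im) ^ 2) : ℝ) : ℂ)
      ∧ Complex.exp ((F (u z) : ℂ)) * wderiv u z
          * wderiv (fun w => starRingEnd ℂ (u w)) z = ((-c / 4 : ℝ) : ℂ)) := by
  obtain rfl : v = sinhProfile √c (arsinh √c) := hv
  subst hF hu
  have hs : 0 < √c := sqrt_pos.mpr hc
  have hpos : ∀ y, 1 ≤ y → 0 < sinhProfile √c (arsinh √c) y :=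
    fun _ => sinhProfile_pos hs (arsinh_pos_iff.mpr hs)
  refine ⟨⟨sinhProfile_arsinh_one hs.ne', hpos, tendsto_sinhProfile_atTop _ hs⟩,
    sinhProfile_ode _ hs.ne', fun z hz => ?_⟩
  have hopf := hyperbolic_hopf_density_re_add_I_mul
    (hasDerivAt_sinhProfile _ hs.ne' z.im).differentiableAt.hasDerivAt (hpos z.im hz)
  refine ⟨hopf, hopf.trans ?_⟩
  rw [one_sub_deriv_sinhProfile_sq _ hs.ne', sq_sqrt hc.le]
  have hv_ne := (hpos z.im hz).ne'
  field_simp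
end

section
/- Let a > 0, let Ω = {x + iy ∈ ℂ : y > 0}, and let F : H → ℝ, F(w) = −2·log(Im w), on the upper half-plane H = {w : Im w > 0}. Then the map U : Ω → H defined by U(x + iy) = x + (i/a)·sinh(a·y) is a harmonic map with respect to the hyperbolic metric: U_{zz̄} + (F_w ∘ U)·U_z·U_{z̄} = 0 on Ω. -/
/-!
The map `U(x + iy) = x + (i/a) sinh(a y)` is a sum of a function of `x` and a function of `y`,
so its Wirtinger derivatives are one-variable derivatives:
`U_z = (1 + cosh(a y))/2` and `U_z̄ = (1 - cosh(a y))/2`, whence `U_{zz̄} = i a sinh(a y)/4`.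
Since `F_w = i / Im w` and `Im U = sinh(a y)/a`, the harmonic map equation reduces to
`cosh² - sinh² = 1`.
-/

open Complex

theorem fderiv_comp_re_add_comp_im {E : Type*} [NormedAddCommGroup E] [NormedSpace ℝ E]
    {φ ψ : ℝ → E} {φ' ψ' : E} {z : ℂ} (hφ : HasDerivAt φ φ' z.re) (hψ : HasDerivAt ψ ψ' z.im)
    (v : ℂ) : fderiv ℝ (fun w : ℂ => φ w.re + ψ w.im) z v = v.re • φ' + v.im • ψ' := by
  have hre := hφ.hasFDerivAt.comp z reCLM.hasFDerivAt
  have him := hψ.hasFDerivAt.comp z imCLM.hasFDerivAt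
  have h : HasFDerivAt (fun w : ℂ => φ w.re + ψ w.im) _ z := hre.add him
  rw [h.fderiv]
  simp

section ReImSeparated

variable {φ ψ : ℝ → ℂ} {φ' ψ' : ℂ} {z : ℂ}

theorem wderiv_comp_re_add_comp_im (hφ : HasDerivAt φ φ' z.re) (hψ : HasDerivAt ψ ψ' z.im) :
    wderiv (fun w : ℂ => φ w.re + ψ w.im) z = (φ' - I * ψ') / 2 := by
  simp [wderiv, fderiv_comp_re_add_comp_im hφ hψ]

theorem wderivBar_comp_re_add_comp_im (hφ : HasDerivAt φ φ' z.re) (hψ : HasDerivAt ψ ψ' z.im) :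
    wderivBar (fun w : ℂ => φ w.re + ψ w.im) z = (φ' + I * ψ') / 2 := by
  simp [wderivBar, fderiv_comp_re_add_comp_im hφ hψ]

theorem wderiv_comp_im (hψ : HasDerivAt ψ ψ' z.im) :
    wderiv (fun w : ℂ => ψ w.im) z = -(I * ψ') / 2 := by
  simpa using wderiv_comp_re_add_comp_im (hasDerivAt_const z.re (0 : ℂ)) hψ

end ReImSeparated

noncomputable def liTamMap (a : ℝ) (z : ℂ) : ℂ :=
  z.re + I / a * (Real.sinh (a * z.im) : ℂ)

section LiTam

variable {a : ℝ}

theorem hasDerivAt_liTam_im (ha : a ≠ 0) (y : ℝ) :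
    HasDerivAt (fun t : ℝ => I / a * (Real.sinh (a * t) : ℂ)) (I * Real.cosh (a * y)) y := by
  have ha' : (a : ℂ) ≠ 0 := ofReal_ne_zero.mpr ha
  refine ((((hasDerivAt_id' y).const_mul a).sinh.ofReal_comp).const_mul (I / a)).congr_deriv ?_
  push_cast
  field_simp

theorem wderiv_liTamMap (ha : a ≠ 0) (z : ℂ) :
    wderiv (liTamMap a) z = (1 + Real.cosh (a * z.im)) / 2 := by
  unfold liTamMap
  rw [wderiv_comp_re_add_comp_im (hasDerivAt_id' _).ofReal_comp (hasDerivAt_liTam_im ha _),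
    ofReal_one, ← mul_assoc, I_mul_I]
  ring

theorem wderivBar_liTamMap (ha : a ≠ 0) (z : ℂ) :
    wderivBar (liTamMap a) z = (1 - Real.cosh (a * z.im)) / 2 := by
  unfold liTamMap
  rw [wderivBar_comp_re_add_comp_im (hasDerivAt_id' _).ofReal_comp (hasDerivAt_liTam_im ha _),
    ofReal_one, ← mul_assoc, I_mul_I]
  ring

theorem wderiv_wderivBar_liTamMap (ha : a ≠ 0) (z : ℂ) :
    wderiv (wderivBar (liTamMap a)) z = I * a * Real.sinh (a * z.im) / 4 := by
  have hψ : HasDerivAt (fun t : ℝ => (1 - (Real.cosh (a * t) : ℂ)) / 2)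
      (-(a * Real.sinh (a * z.im)) / 2) z.im := by
    refine ((((hasDerivAt_id' z.im).const_mul a).cosh.ofReal_comp).const_sub 1).div_const 2
      |>.congr_deriv ?_
    push_cast
    ring
  rw [show wderivBar (liTamMap a) = fun w => (1 - (Real.cosh (a * w.im) : ℂ)) / 2 from
    funext (wderivBar_liTamMap ha), wderiv_comp_im hψ]
  ring

theorem im_liTamMap (z : ℂ) : (liTamMap a z).im = Real.sinh (a * z.im) / a := by
  have h : I / a * (Real.sinh (a * z.im) : ℂ) = ((Real.sinh (a * z.im) / a : ℝ) : ℂ) * I := by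
    rw [ofReal_div]
    ring
  rw [liTamMap, h, add_im, ofReal_im, mul_I_im, ofReal_re, zero_add]

end LiTam

theorem wderiv_neg_two_mul_log_im {p : ℂ} (hp : p.im ≠ 0) :
    wderiv (fun w : ℂ => ((-2 * Real.log w.im : ℝ) : ℂ)) p = I / p.im := by
  rw [wderiv_comp_im ((Real.hasDerivAt_log hp).const_mul (-2)).ofReal_comp]
  push_cast
  ring

/-- The Li–Tam map `U(x+iy) = x + (i/a) sinh(a y)` is a harmonic
map of the upper half-plane into itself with respect to the hyperbolic metric
`F(w) = −2 log(Im w)`. -/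
theorem li_tam_harmonic_map
    (a : ℝ) (ha : 0 < a)
    (Ω : Set ℂ) (hΩ : Ω = {z : ℂ | 0 < z.im})
    (F : ℂ → ℝ) (hF : F = fun w => -2 * Real.log w.im)
    (U : ℂ → ℂ)
    (hU : U = fun z => (z.re : ℂ)
      + Complex.I / (a : ℂ) * ((Real.sinh (a * z.im) : ℝ) : ℂ)) :
    ∀ z ∈ Ω,
      wderiv (fun w => wderivBar U w) z
        + wderiv (fun w => ((F w : ℝ) : ℂ)) (U z) * wderiv U z * wderivBar U z = 0 := by
  replace hU : U = liTamMap a := hU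
  subst hΩ hF hU
  intro z (hz : 0 < z.im)
  have hs : 0 < Real.sinh (a * z.im) := Real.sinh_pos_iff.mpr (by positivity)
  have him : (liTamMap a z).im ≠ 0 := by rw [im_liTamMap]; positivity
  rw [wderiv_wderivBar_liTamMap ha.ne', wderiv_neg_two_mul_log_im him, im_liTamMap,
    wderiv_liTamMap ha.ne', wderivBar_liTamMap ha.ne']
  set s := Real.sinh (a * z.im)
  set c := Real.cosh (a * z.im)
  have hcosh : (c : ℂ) ^ 2 = s ^ 2 + 1 := by exact_mod_cast Real.cosh_sq (a * z.im)
  have ha' : (a : ℂ) ≠ 0 := ofReal_ne_zero.mpr ha.ne'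
  have hs' : (s : ℂ) ≠ 0 := ofReal_ne_zero.mpr hs.ne'
  push_cast
  field_simp
  linear_combination (-4 * I * a) * hcosh
end

section
/- Let Ω ⊆ ℝ² be open and let ω, θ : Ω → ℝ be smooth functions satisfying the Bäcklund system ω_ξ − θ_η = −2·sinh(ω)·sin(θ) and ω_η + θ_ξ = −2·cosh(ω)·cos(θ) on Ω. Then ω satisfies the elliptic sinh-Gordon equation Δω = ω_{ξξ} + ω_{ηη} = 2·sinh(2ω) on Ω. -/
/-- If smooth `ω, θ` satisfy the Bäcklund system
`ω_ξ − θ_η = −2 sinh(ω) sin(θ)`, `ω_η + θ_ξ = −2 cosh(ω) cos(θ)` on an open set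
`Ω ⊆ ℝ²`, then `ω` solves the elliptic sinh-Gordon equation `Δω = 2 sinh(2ω)`. -/
theorem backlund_gives_sinh_gordon
    (Ω : Set (ℝ × ℝ)) (hΩ : IsOpen Ω)
    (ω θ : ℝ × ℝ → ℝ) (hω : ContDiffOn ℝ (⊤ : ℕ∞) ω Ω) (hθ : ContDiffOn ℝ (⊤ : ℕ∞) θ Ω)
    (hsys : ∀ p ∈ Ω,
      fderiv ℝ ω p (1, 0) - fderiv ℝ θ p (0, 1)
        = -2 * Real.sinh (ω p) * Real.sin (θ p)
      ∧ fderiv ℝ ω p (0, 1) + fderiv ℝ θ p (1, 0)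
        = -2 * Real.cosh (ω p) * Real.cos (θ p)) :
    ∀ p ∈ Ω,
      fderiv ℝ (fun q => fderiv ℝ ω q (1, 0)) p (1, 0)
        + fderiv ℝ (fun q => fderiv ℝ ω q (0, 1)) p (0, 1)
        = 2 * Real.sinh (2 * ω p) := by
  intro p hp
  have hmem : Ω ∈ nhds p := hΩ.mem_nhds hp
  have hωp : ContDiffAt ℝ (⊤ : ℕ∞) ω p := hω.contDiffAt hmem
  have hθp : ContDiffAt ℝ (⊤ : ℕ∞) θ p := hθ.contDiffAt hmem
  have hdω : HasFDerivAt ω (fderiv ℝ ω p) p :=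
    (hωp.differentiableAt (by simp)).hasFDerivAt
  have hdθ : HasFDerivAt θ (fderiv ℝ θ p) p :=
    (hθp.differentiableAt (by simp)).hasFDerivAt
  -- second derivative of θ
  have hθ2 : ContDiffAt ℝ 1 (fderiv ℝ θ) p := hθp.fderiv_right (WithTop.coe_le_coe.mpr le_top)
  have hdθ2 : HasFDerivAt (fderiv ℝ θ) (fderiv ℝ (fderiv ℝ θ) p) p :=
    (hθ2.differentiableAt one_ne_zero).hasFDerivAt
  have hsymm : IsSymmSndFDerivAt ℝ θ p := hθp.isSymmSndFDerivAt (by rw [minSmoothness_of_isRCLikeNormedField]; exact WithTop.coe_le_coe.mpr le_top)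
  -- derivative of q ↦ fderiv θ q v
  have hval : ∀ v : ℝ × ℝ, HasFDerivAt (fun q => fderiv ℝ θ q v)
      ((ContinuousLinearMap.apply ℝ ℝ v).comp (fderiv ℝ (fderiv ℝ θ) p)) p :=
    fun v => ((ContinuousLinearMap.apply ℝ ℝ v).hasFDerivAt).comp p hdθ2
  -- derivative of nonlinear terms
  have hshh : HasFDerivAt (fun q => Real.sinh (ω q)) (Real.cosh (ω p) • fderiv ℝ ω p) p :=
    (Real.hasDerivAt_sinh (ω p)).comp_hasFDerivAt p hdω
  have hchh : HasFDerivAt (fun q => Real.cosh (ω q)) (Real.sinh (ω p) • fderiv ℝ ω p) p :=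
    (Real.hasDerivAt_cosh (ω p)).comp_hasFDerivAt p hdω
  have hsn : HasFDerivAt (fun q => Real.sin (θ q)) (Real.cos (θ p) • fderiv ℝ θ p) p :=
    (Real.hasDerivAt_sin (θ p)).comp_hasFDerivAt p hdθ
  have hcs : HasFDerivAt (fun q => Real.cos (θ q)) (-Real.sin (θ p) • fderiv ℝ θ p) p :=
    (Real.hasDerivAt_cos (θ p)).comp_hasFDerivAt p hdθ
  have hm1 : HasFDerivAt (fun q => Real.sinh (ω q) * Real.sin (θ q))
      (Real.sinh (ω p) • (Real.cos (θ p) • fderiv ℝ θ p)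
        + Real.sin (θ p) • (Real.cosh (ω p) • fderiv ℝ ω p)) p := hshh.mul hsn
  have hm2 : HasFDerivAt (fun q => Real.cosh (ω q) * Real.cos (θ q))
      (Real.cosh (ω p) • (-Real.sin (θ p) • fderiv ℝ θ p)
        + Real.cos (θ p) • (Real.sinh (ω p) • fderiv ℝ ω p)) p := hchh.mul hcs
  -- RHS functions
  have hR1 : HasFDerivAt (fun q => fderiv ℝ θ q (0, 1)
        - (2:ℝ) * (Real.sinh (ω q) * Real.sin (θ q)))
      ((ContinuousLinearMap.apply ℝ ℝ ((0:ℝ), (1:ℝ))).comp (fderiv ℝ (fderiv ℝ θ) p)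
        - (2:ℝ) • (Real.sinh (ω p) • (Real.cos (θ p) • fderiv ℝ θ p)
          + Real.sin (θ p) • (Real.cosh (ω p) • fderiv ℝ ω p))) p :=
    (hval (0, 1)).sub (hm1.const_mul (2:ℝ))
  have hR2 : HasFDerivAt (fun q => -(fderiv ℝ θ q (1, 0))
        - (2:ℝ) * (Real.cosh (ω q) * Real.cos (θ q)))
      (-((ContinuousLinearMap.apply ℝ ℝ ((1:ℝ), (0:ℝ))).comp (fderiv ℝ (fderiv ℝ θ) p))
        - (2:ℝ) • (Real.cosh (ω p) • (-Real.sin (θ p) • fderiv ℝ θ p)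
          + Real.cos (θ p) • (Real.sinh (ω p) • fderiv ℝ ω p))) p :=
    ((hval (1, 0)).neg).sub (hm2.const_mul (2:ℝ))
  -- eventual equality
  have hE1 : (fun q => fderiv ℝ ω q (1, 0))
      =ᶠ[nhds p] (fun q => fderiv ℝ θ q (0, 1) - (2:ℝ) * (Real.sinh (ω q) * Real.sin (θ q))) := by
    filter_upwards [hmem] with q hq
    have := (hsys q hq).1
    linarith [this]
  have hE2 : (fun q => fderiv ℝ ω q (0, 1))
      =ᶠ[nhds p] (fun q => -(fderiv ℝ θ q (1, 0)) - (2:ℝ) * (Real.cosh (ω q) * Real.cos (θ q))) := by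
    filter_upwards [hmem] with q hq
    have := (hsys q hq).2
    linarith [this]
  have h1 : fderiv ℝ (fun q => fderiv ℝ ω q (1, 0)) p (1, 0)
      = fderiv ℝ (fderiv ℝ θ) p (1, 0) (0, 1)
        - 2 * (Real.sinh (ω p) * (Real.cos (θ p) * fderiv ℝ θ p (1, 0))
          + Real.sin (θ p) * (Real.cosh (ω p) * fderiv ℝ ω p (1, 0))) := by
    rw [hE1.fderiv_eq, hR1.fderiv]
    simp [smul_eq_mul]
    ring
  have h2 : fderiv ℝ (fun q => fderiv ℝ ω q (0, 1)) p (0, 1)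
      = -(fderiv ℝ (fderiv ℝ θ) p (0, 1) (1, 0))
        - 2 * (Real.cosh (ω p) * (-Real.sin (θ p) * fderiv ℝ θ p (0, 1))
          + Real.cos (θ p) * (Real.sinh (ω p) * fderiv ℝ ω p (0, 1))) := by
    rw [hE2.fderiv_eq, hR2.fderiv]
    simp [smul_eq_mul]
    ring
  have hs := hsymm (1, 0) (0, 1)
  have e1 := (hsys p hp).1
  have e2 := (hsys p hp).2
  have pyth : Real.sin (θ p) ^ 2 + Real.cos (θ p) ^ 2 = 1 := Real.sin_sq_add_cos_sq _
  rw [h1, h2, Real.sinh_two_mul, hs]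
  linear_combination (-2 * Real.sin (θ p) * Real.cosh (ω p)) * e1 + (-2 * Real.sinh (ω p) * Real.cos (θ p)) * e2 + (4 * Real.sinh (ω p) * Real.cosh (ω p)) * pyth
end

section
/- Let Ω ⊆ ℝ² be open and let ω, θ : Ω → ℝ be smooth functions satisfying the Bäcklund system ω_ξ − θ_η = −2·sinh(ω)·sin(θ) and ω_η + θ_ξ = −2·cosh(ω)·cos(θ) on Ω. Then θ satisfies the elliptic sine-Gordon equation Δθ = θ_{ξξ} + θ_{ηη} = −2·sin(2θ) on Ω. -/
/-- If smooth `ω, θ` satisfy the Bäcklund system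
`ω_ξ − θ_η = −2 sinh(ω) sin(θ)`, `ω_η + θ_ξ = −2 cosh(ω) cos(θ)` on an open set
`Ω ⊆ ℝ²`, then `θ` solves the elliptic sine-Gordon equation `Δθ = −2 sin(2θ)`. -/
theorem backlund_gives_sine_gordon
    (Ω : Set (ℝ × ℝ)) (hΩ : IsOpen Ω)
    (ω θ : ℝ × ℝ → ℝ) (hω : ContDiffOn ℝ (⊤ : ℕ∞) ω Ω) (hθ : ContDiffOn ℝ (⊤ : ℕ∞) θ Ω)
    (hsys : ∀ p ∈ Ω,
      fderiv ℝ ω p (1, 0) - fderiv ℝ θ p (0, 1)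
        = -2 * Real.sinh (ω p) * Real.sin (θ p)
      ∧ fderiv ℝ ω p (0, 1) + fderiv ℝ θ p (1, 0)
        = -2 * Real.cosh (ω p) * Real.cos (θ p)) :
    ∀ p ∈ Ω,
      fderiv ℝ (fun q => fderiv ℝ θ q (1, 0)) p (1, 0)
        + fderiv ℝ (fun q => fderiv ℝ θ q (0, 1)) p (0, 1)
        = -2 * Real.sin (2 * θ p) := by
  intro p hp
  have hmem : Ω ∈ nhds p := hΩ.mem_nhds hp
  have hωp : ContDiffAt ℝ (⊤ : ℕ∞) ω p := hω.contDiffAt hmem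
  have hθp : ContDiffAt ℝ (⊤ : ℕ∞) θ p := hθ.contDiffAt hmem
  have hω1 : DifferentiableAt ℝ ω p := hωp.differentiableAt (by simp)
  have hθ1 : DifferentiableAt ℝ θ p := hθp.differentiableAt (by simp)
  have hωf : DifferentiableAt ℝ (fderiv ℝ ω) p :=
    (hωp.fderiv_right (m := (⊤ : ℕ∞)) (by simp)).differentiableAt (by simp)
  have hθf : DifferentiableAt ℝ (fderiv ℝ θ) p :=
    (hθp.fderiv_right (m := (⊤ : ℕ∞)) (by simp)).differentiableAt (by simp)
  -- symmetry of second derivative of ω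
  have hsym : fderiv ℝ (fderiv ℝ ω) p (1, 0) (0, 1)
      = fderiv ℝ (fderiv ℝ ω) p (0, 1) (1, 0) := by
    exact hωp.isSymmSndFDerivAt (by rw [minSmoothness_of_isRCLikeNormedField]; exact WithTop.coe_le_coe.mpr le_top) (1, 0) (0, 1)
  -- eventual equalities from the system
  have E1 : (fun q => fderiv ℝ θ q (0, 1))
      =ᶠ[nhds p] (fun q => fderiv ℝ ω q (1, 0) + 2 * Real.sinh (ω q) * Real.sin (θ q)) := by
    filter_upwards [hmem] with q hq
    have := (hsys q hq).1
    ring_nf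
    ring_nf at this
    linarith
  have E2 : (fun q => fderiv ℝ θ q (1, 0))
      =ᶠ[nhds p] (fun q => -2 * Real.cosh (ω q) * Real.cos (θ q) - fderiv ℝ ω q (0, 1)) := by
    filter_upwards [hmem] with q hq
    have := (hsys q hq).2
    linarith
  -- HasFDerivAt facts for the building blocks at p
  have hωd := hω1.hasFDerivAt
  have hθd := hθ1.hasFDerivAt
  have hsinh : HasFDerivAt (fun q => Real.sinh (ω q)) (Real.cosh (ω p) • fderiv ℝ ω p) p :=
    (Real.hasDerivAt_sinh (ω p)).comp_hasFDerivAt p hωd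
  have hcosh : HasFDerivAt (fun q => Real.cosh (ω q)) (Real.sinh (ω p) • fderiv ℝ ω p) p :=
    (Real.hasDerivAt_cosh (ω p)).comp_hasFDerivAt p hωd
  have hsin : HasFDerivAt (fun q => Real.sin (θ q)) (Real.cos (θ p) • fderiv ℝ θ p) p :=
    (Real.hasDerivAt_sin (θ p)).comp_hasFDerivAt p hθd
  have hcos : HasFDerivAt (fun q => Real.cos (θ q)) ((-Real.sin (θ p)) • fderiv ℝ θ p) p :=
    (Real.hasDerivAt_cos (θ p)).comp_hasFDerivAt p hθd
  have hωξ : HasFDerivAt (fun q => fderiv ℝ ω q (1, 0)) _ p :=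
    hωf.hasFDerivAt.clm_apply (hasFDerivAt_const (1, 0) p)
  have hωη : HasFDerivAt (fun q => fderiv ℝ ω q (0, 1)) _ p :=
    hωf.hasFDerivAt.clm_apply (hasFDerivAt_const (0, 1) p)
  -- derivative of the RHS of E1
  have H1 : HasFDerivAt (fun q => fderiv ℝ ω q (1, 0) + 2 * Real.sinh (ω q) * Real.sin (θ q)) _ p :=
    hωξ.add (((hsinh.const_mul 2)).mul hsin)
  have H2 : HasFDerivAt (fun q => -2 * Real.cosh (ω q) * Real.cos (θ q) - fderiv ℝ ω q (0, 1)) _ p :=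
    ((hcosh.const_mul (-2)).mul hcos).sub hωη
  -- rewrite the two second-derivative terms
  have T1 : fderiv ℝ (fun q => fderiv ℝ θ q (0, 1)) p (0, 1)
      = fderiv ℝ (fderiv ℝ ω) p (0, 1) (1, 0)
        + (2 * Real.cosh (ω p) * fderiv ℝ ω p (0, 1)) * Real.sin (θ p)
        + (2 * Real.sinh (ω p)) * (Real.cos (θ p) * fderiv ℝ θ p (0, 1)) := by
    rw [E1.fderiv_eq, H1.fderiv]
    simp [ContinuousLinearMap.add_apply, ContinuousLinearMap.smul_apply]
    ring
  have T2 : fderiv ℝ (fun q => fderiv ℝ θ q (1, 0)) p (1, 0)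
      = (-2 * Real.sinh (ω p) * fderiv ℝ ω p (1, 0)) * Real.cos (θ p)
        + (-2 * Real.cosh (ω p)) * (-Real.sin (θ p) * fderiv ℝ θ p (1, 0))
        - fderiv ℝ (fderiv ℝ ω) p (1, 0) (0, 1) := by
    rw [E2.fderiv_eq, H2.fderiv]
    simp [ContinuousLinearMap.add_apply, ContinuousLinearMap.smul_apply]
    ring
  obtain ⟨hs1, hs2⟩ := hsys p hp
  have hch : Real.cosh (ω p) ^ 2 - Real.sinh (ω p) ^ 2 = 1 := Real.cosh_sq_sub_sinh_sq (ω p)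
  rw [T1, T2, hsym, Real.sin_two_mul]
  linear_combination (-2 * Real.sinh (ω p) * Real.cos (θ p)) * hs1
    + (2 * Real.cosh (ω p) * Real.sin (θ p)) * hs2
    + (-4 * Real.sin (θ p) * Real.cos (θ p)) * hch
end
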